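/- arXiv:2003.03991 — 4 statements merged into one kernel-verified Lean document; each statement's English description precedes it below -/
import Mathlib

section
/- Let ω ∈ ℝ and let φ : ℝ³ → [0, ∞] be measurable. Then ∫_{|ζ| ≥ 1} ( ∫₀^∞ e^{−|ζ|² t} φ(O(ωt)ζ) dt )² dζ ≤ ∫_{|ζ| ≥ 1} φ(ζ)² |ζ|^{−4} dζ (an inequality in [0, ∞]). -/
open MeasureTheory
open scoped ENNReal

noncomputable section

abbrev E3 := EuclideanSpace ℝ (Fin 3)

/-- The rotation `O(θ)` about the first coordinate axis, with rows
`(1,0,0), (0,cos θ, -sin θ), (0, sin θ, cos θ)`, acting on `ℝ³`. -/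
def Orot (θ : ℝ) (x : E3) : E3 :=
  (WithLp.equiv 2 (Fin 3 → ℝ)).symm
    ![x 0, Real.cos θ * x 1 - Real.sin θ * x 2, Real.sin θ * x 1 + Real.cos θ * x 2]

lemma Orot_apply (θ : ℝ) (x : E3) (i : Fin 3) :
    Orot θ x i = ![x 0, Real.cos θ * x 1 - Real.sin θ * x 2,
      Real.sin θ * x 1 + Real.cos θ * x 2] i := rfl

lemma Orot_Orot_neg (θ : ℝ) (x : E3) : Orot (-θ) (Orot θ x) = x := by
  ext i
  fin_cases i <;>
    simp [Orot_apply, Matrix.cons_val_zero, Matrix.cons_val_one, Matrix.head_cons]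
  · linear_combination (x 1) * Real.sin_sq_add_cos_sq θ
  · linear_combination (x 2) * Real.sin_sq_add_cos_sq θ

lemma norm_Orot (θ : ℝ) (x : E3) : ‖Orot θ x‖ = ‖x‖ := by
  rw [EuclideanSpace.norm_eq, EuclideanSpace.norm_eq]
  congr 1
  rw [Fin.sum_univ_three, Fin.sum_univ_three]
  simp only [Orot_apply, Matrix.cons_val_zero, Matrix.cons_val_one, Matrix.head_cons,
    Matrix.cons_val_two, Matrix.tail_cons, Real.norm_eq_abs, sq_abs]
  linear_combination (x 1 ^ 2 + x 2 ^ 2) * Real.sin_sq_add_cos_sq θ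

/-- `Orot θ` as a linear isometry equivalence. -/
def rotLI (θ : ℝ) : E3 ≃ₗᵢ[ℝ] E3 where
  toFun := Orot θ
  invFun := Orot (-θ)
  map_add' x y := by
    ext i
    fin_cases i <;>
      simp [Orot_apply, Matrix.cons_val_zero, Matrix.cons_val_one, Matrix.head_cons] <;> ring
  map_smul' c x := by
    ext i
    fin_cases i <;>
      simp [Orot_apply, Matrix.cons_val_zero, Matrix.cons_val_one, Matrix.head_cons] <;> ring
  left_inv x := Orot_Orot_neg θ x
  right_inv x := by simpa using Orot_Orot_neg (-θ) x
  norm_map' x := norm_Orot θ x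

lemma measurable_Orot (θ : ℝ) : Measurable (Orot θ) :=
  (rotLI θ).continuous.measurable

lemma continuous_Orot_pair (ω : ℝ) :
    Continuous fun p : E3 × ℝ => Orot (ω * p.2) p.1 := by
  have h0 : Continuous fun p : E3 × ℝ => (p.1 : E3) 0 :=
    ((EuclideanSpace.proj (0 : Fin 3)).continuous).comp continuous_fst
  have h1 : Continuous fun p : E3 × ℝ => (p.1 : E3) 1 :=
    ((EuclideanSpace.proj (1 : Fin 3)).continuous).comp continuous_fst
  have h2 : Continuous fun p : E3 × ℝ => (p.1 : E3) 2 :=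
    ((EuclideanSpace.proj (2 : Fin 3)).continuous).comp continuous_fst
  have hc : Continuous fun p : E3 × ℝ => Real.cos (ω * p.2) :=
    Real.continuous_cos.comp (continuous_const.mul continuous_snd)
  have hs : Continuous fun p : E3 × ℝ => Real.sin (ω * p.2) :=
    Real.continuous_sin.comp (continuous_const.mul continuous_snd)
  have : Continuous fun p : E3 × ℝ => ((Orot (ω * p.2) p.1 : E3) : Fin 3 → ℝ) := by
    apply continuous_pi
    intro i
    fin_cases i <;>
      simp only [Orot_apply, Matrix.cons_val_zero, Matrix.cons_val_one, Matrix.head_cons,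
        Fin.isValue, Matrix.cons_val_two, Matrix.tail_cons]
    · exact h0
    · exact (hc.mul h1).sub (hs.mul h2)
    · exact (hs.mul h1).add (hc.mul h2)
  exact (PiLp.continuous_toLp 2 fun _ : Fin 3 => ℝ).comp this

lemma lint_exp (a : ℝ) (ha : 0 < a) :
    ∫⁻ t in Set.Ioi (0 : ℝ), ENNReal.ofReal (Real.exp (-(a * t))) = ENNReal.ofReal a⁻¹ := by
  rw [← ofReal_integral_eq_lintegral_ofReal]
  · congr 1
    have h := integral_comp_mul_left_Ioi (fun x => Real.exp (-x)) 0 ha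
    simpa [mul_zero, integral_exp_neg_Ioi, integral_exp_Iic_zero, smul_eq_mul] using h
  · have := exp_neg_integrableOn_Ioi 0 ha
    simpa [neg_mul] using this.integrable
  · exact Filter.Eventually.of_forall fun x => (Real.exp_pos _).le

lemma sqrt_pow_cancel (A : ℝ≥0∞) : (A ^ (1 / 2 : ℝ)) ^ (2 : ℕ) = A := by
  rw [← ENNReal.rpow_natCast (A ^ (1 / 2 : ℝ)) 2, ← ENNReal.rpow_mul]
  norm_num

lemma cauchy_schwarz_exp (a : ℝ) (ha : 0 < a) (ψ : ℝ → ℝ≥0∞) (hψ : Measurable ψ) :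
    (∫⁻ t in Set.Ioi (0 : ℝ), ENNReal.ofReal (Real.exp (-(a * t))) * ψ t) ^ 2
      ≤ ENNReal.ofReal a⁻¹ *
        ∫⁻ t in Set.Ioi (0 : ℝ), ENNReal.ofReal (Real.exp (-(a * t))) * ψ t ^ 2 := by
  set μ := volume.restrict (Set.Ioi (0 : ℝ)) with hμ
  set f : ℝ → ℝ≥0∞ := fun t => ENNReal.ofReal (Real.exp (-(a * t) / 2)) with hf
  have hfm : Measurable f := by
    apply ENNReal.measurable_ofReal.comp
    exact (Real.continuous_exp.comp (by continuity)).measurable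
  have hf2 : ∀ t, f t * f t = ENNReal.ofReal (Real.exp (-(a * t))) := by
    intro t
    rw [hf, ← ENNReal.ofReal_mul (Real.exp_nonneg _), ← Real.exp_add]
    norm_num
  have hconj : (2 : ℝ).HolderConjugate 2 := Real.holderConjugate_iff.mpr ⟨by norm_num, by norm_num⟩
  have hCS := ENNReal.lintegral_mul_le_Lp_mul_Lq μ hconj hfm.aemeasurable
    (hfm.mul hψ).aemeasurable
  have hfg : ∀ t, (f * (f * ψ)) t = ENNReal.ofReal (Real.exp (-(a * t))) * ψ t := by
    intro t
    simp only [Pi.mul_apply, ← mul_assoc, hf2]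
  have hA : (∫⁻ t, f t ^ (2 : ℝ) ∂μ) = ENNReal.ofReal a⁻¹ := by
    have : ∀ t, f t ^ (2 : ℝ) = ENNReal.ofReal (Real.exp (-(a * t))) := by
      intro t
      rw [show (2 : ℝ) = ((2 : ℕ) : ℝ) by norm_num, ENNReal.rpow_natCast, sq, hf2]
    simp_rw [this]
    exact lint_exp a ha
  have hB : (∫⁻ t, (f t * ψ t) ^ (2 : ℝ) ∂μ)
      = ∫⁻ t, ENNReal.ofReal (Real.exp (-(a * t))) * ψ t ^ 2 ∂μ := by
    congr 1
    funext t
    rw [show (2 : ℝ) = ((2 : ℕ) : ℝ) by norm_num, ENNReal.rpow_natCast, mul_pow, sq, hf2, sq]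
  calc (∫⁻ t, ENNReal.ofReal (Real.exp (-(a * t))) * ψ t ∂μ) ^ 2
      = (∫⁻ t, (f * (f * ψ)) t ∂μ) ^ 2 := by
        congr 1; apply lintegral_congr; intro t; rw [hfg]
    _ ≤ ((∫⁻ t, f t ^ (2 : ℝ) ∂μ) ^ (1 / 2 : ℝ)
          * (∫⁻ t, (f t * ψ t) ^ (2 : ℝ) ∂μ) ^ (1 / 2 : ℝ)) ^ 2 := by
        gcongr
        exact hCS
    _ = (∫⁻ t, f t ^ (2 : ℝ) ∂μ) * ∫⁻ t, (f t * ψ t) ^ (2 : ℝ) ∂μ := by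
        rw [mul_pow, sqrt_pow_cancel, sqrt_pow_cancel]
    _ = ENNReal.ofReal a⁻¹ * ∫⁻ t, ENNReal.ofReal (Real.exp (-(a * t))) * ψ t ^ 2 ∂μ := by
        rw [hA, hB]

/-- High-frequency estimate:
`∫_{|ζ|≥1} (∫₀^∞ e^{-|ζ|²t} φ(O(ωt)ζ) dt)² dζ ≤ ∫_{|ζ|≥1} φ(ζ)² |ζ|^{-4} dζ` in `[0,∞]`. -/
theorem stmt2 (ω : ℝ) (φ : E3 → ℝ≥0∞) (hφ : Measurable φ) :
    (∫⁻ ζ in {ζ : E3 | 1 ≤ ‖ζ‖},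
        (∫⁻ t in Set.Ioi (0 : ℝ),
            ENNReal.ofReal (Real.exp (-(‖ζ‖ ^ 2 * t))) * φ (Orot (ω * t) ζ)) ^ 2)
      ≤ ∫⁻ ζ in {ζ : E3 | 1 ≤ ‖ζ‖}, φ ζ ^ 2 / ENNReal.ofReal (‖ζ‖ ^ 4) := by
  set S : Set E3 := {ζ : E3 | 1 ≤ ‖ζ‖} with hSdef
  have hS : MeasurableSet S := measurableSet_le measurable_const measurable_norm
  -- joint measurability of the main integrand family
  have hmap : Measurable fun p : E3 × ℝ => φ (Orot (ω * p.2) p.1) :=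
    hφ.comp (continuous_Orot_pair ω).measurable
  have hexp : Measurable fun p : E3 × ℝ => ENNReal.ofReal (Real.exp (-(‖p.1‖ ^ 2 * p.2))) := by
    apply ENNReal.measurable_ofReal.comp
    exact (Real.continuous_exp.comp (by fun_prop)).measurable
  -- the CS-dominating function, with the constant pushed inside
  set G : E3 → ℝ → ℝ≥0∞ := fun ζ t =>
    ENNReal.ofReal (Real.exp (-(‖ζ‖ ^ 2 * t))) *
      (ENNReal.ofReal ((‖ζ‖ ^ 2)⁻¹) * φ (Orot (ω * t) ζ) ^ 2) with hGdef
  have hGm : Measurable (Function.uncurry G) := by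
    apply hexp.mul
    apply Measurable.mul
    · exact ENNReal.measurable_ofReal.comp (by fun_prop)
    · exact hmap.pow_const 2
  -- Step 1: Cauchy–Schwarz pointwise on S
  have step1 : (∫⁻ ζ in S,
      (∫⁻ t in Set.Ioi (0 : ℝ),
          ENNReal.ofReal (Real.exp (-(‖ζ‖ ^ 2 * t))) * φ (Orot (ω * t) ζ)) ^ 2)
      ≤ ∫⁻ ζ in S, ∫⁻ t in Set.Ioi (0 : ℝ), G ζ t := by
    apply setLIntegral_mono
    · exact hGm.lintegral_prod_right
    · intro ζ hζ
      have hζ' : (1 : ℝ) ≤ ‖ζ‖ := hζ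
      have ha : (0 : ℝ) < ‖ζ‖ ^ 2 := by positivity
      have hψm : Measurable fun t : ℝ => φ (Orot (ω * t) ζ) := by
        apply hφ.comp
        exact ((continuous_Orot_pair ω).comp
          (Continuous.prodMk continuous_const continuous_id)).measurable
      have hCS := cauchy_schwarz_exp (‖ζ‖ ^ 2) ha (fun t => φ (Orot (ω * t) ζ)) hψm
      refine hCS.trans_eq ?_
      rw [← lintegral_const_mul' _ _ ENNReal.ofReal_ne_top]
      apply lintegral_congr
      intro t
      simp only [hGdef]
      ring
  refine step1.trans ?_
  -- Step 2: Fubini, rotate, Fubini back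
  have hGm' : AEMeasurable (Function.uncurry G)
      ((volume.restrict S).prod (volume.restrict (Set.Ioi (0 : ℝ)))) := hGm.aemeasurable
  rw [lintegral_lintegral_swap hGm']
  -- the rotated-out integrand
  set H : E3 → ℝ → ℝ≥0∞ := fun ζ t =>
    ENNReal.ofReal (Real.exp (-(‖ζ‖ ^ 2 * t))) *
      (ENNReal.ofReal ((‖ζ‖ ^ 2)⁻¹) * φ ζ ^ 2) with hHdef
  have hHm : Measurable (Function.uncurry H) := by
    apply hexp.mul
    apply Measurable.mul
    · exact ENNReal.measurable_ofReal.comp (by fun_prop)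
    · exact (hφ.comp measurable_fst).pow_const 2
  have rot : ∀ t : ℝ, (∫⁻ ζ in S, G ζ t) = ∫⁻ ζ in S, H ζ t := by
    intro t
    have hmp : MeasurePreserving (rotLI (ω * t)) volume volume :=
      (rotLI (ω * t)).measurePreserving
    have hemb : MeasurableEmbedding (rotLI (ω * t)) :=
      (rotLI (ω * t)).toHomeomorph.measurableEmbedding
    have hpre : (rotLI (ω * t)) ⁻¹' S = S := by
      ext x
      simp only [Set.mem_preimage, hSdef, Set.mem_setOf_eq]
      rw [(rotLI (ω * t)).norm_map]
    have key := hmp.setLIntegral_comp_preimage_emb hemb (fun ζ => H ζ t) S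
    rw [hpre] at key
    rw [← key]
    apply lintegral_congr
    intro ζ
    have hn : ‖(rotLI (ω * t)) ζ‖ = ‖ζ‖ := (rotLI (ω * t)).norm_map ζ
    simp only [hHdef, hGdef, hn]
    rfl
  rw [lintegral_congr rot, ← lintegral_lintegral_swap hHm.aemeasurable]
  -- Step 3: compute the inner integral and conclude
  apply setLIntegral_mono ((hφ.pow_const 2).div (ENNReal.measurable_ofReal.comp (by fun_prop)))
  intro ζ hζ
  have hζ' : (1 : ℝ) ≤ ‖ζ‖ := hζ
  have ha : (0 : ℝ) < ‖ζ‖ ^ 2 := by positivity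
  have hem : Measurable fun t : ℝ => ENNReal.ofReal (Real.exp (-(‖ζ‖ ^ 2 * t))) :=
    ENNReal.measurable_ofReal.comp (Real.continuous_exp.comp (by continuity)).measurable
  have : (∫⁻ t in Set.Ioi (0 : ℝ), H ζ t)
      = ENNReal.ofReal ((‖ζ‖ ^ 2)⁻¹) * (ENNReal.ofReal ((‖ζ‖ ^ 2)⁻¹) * φ ζ ^ 2) := by
    simp only [hHdef]
    rw [lintegral_mul_const _ hem, lint_exp _ ha, mul_comm]
  rw [this]
  have h4 : (0 : ℝ) < ‖ζ‖ ^ 4 := by positivity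
  rw [← mul_assoc, ← ENNReal.ofReal_mul (by positivity), ← mul_inv,
    show ‖ζ‖ ^ 2 * ‖ζ‖ ^ 2 = ‖ζ‖ ^ 4 by ring,
    ENNReal.ofReal_inv_of_pos h4, Pi.div_apply, Function.comp_apply, ENNReal.div_eq_inv_mul]
end
end

section
/- Let q ∈ (6, ∞]. There exists a constant C = C(q) > 0 such that for every measurable F : ℝ³ → ℂ with ‖F‖_{L^q(ℝ³)} < ∞, ∫_{|ζ| < 1} |ζ|^{−2} ( ∫₀¹ |F(σζ)|² dσ ) dζ ≤ C ‖F‖_{L^q(ℝ³)}². -/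
open MeasureTheory
open Set Metric
open scoped ENNReal NNReal

noncomputable section

lemma finE3 : Module.finrank ℝ E3 = 3 := finrank_euclideanSpace_fin

lemma ballInt {s : ℝ} (hs0 : 0 < s) (hs3 : s < 3) :
    (∫⁻ ζ in Metric.ball (0 : E3) 1, ENNReal.ofReal (‖ζ‖ ^ (-s))) < ⊤ := by
  have hsneg : -s < 0 := neg_neg_iff_pos.mpr hs0
  have h_meas : Measurable fun ζ : E3 => ‖ζ‖ ^ (-s) := by fun_prop
  have h_nn : ∀ ζ : E3, 0 ≤ ‖ζ‖ ^ (-s) := fun ζ => Real.rpow_nonneg (norm_nonneg _) _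
  rw [lintegral_eq_lintegral_meas_le _ (Filter.Eventually.of_forall h_nn) h_meas.aemeasurable]
  set μ := (volume : Measure E3).restrict (ball 0 1) with hμ
  set v := volume (ball (0 : E3) 1) with hv
  have hvfin : v < ⊤ := measure_ball_lt_top
  have key : ∀ t : ℝ, 0 < t →
      μ {a : E3 | t ≤ ‖a‖ ^ (-s)} ≤ volume (closedBall (0 : E3) (t ^ (-s)⁻¹)) := by
    intro t ht
    refine (Measure.restrict_apply_le _ _).trans (measure_mono ?_)
    intro a ha
    simp only [mem_setOf_eq] at ha
    rw [mem_closedBall_zero_iff]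
    rcases eq_or_ne a 0 with rfl | ha0
    · simpa using (Real.rpow_pos_of_pos ht _).le
    · exact (Real.le_rpow_inv_iff_of_neg (norm_pos_iff.mpr ha0) ht hsneg).mpr ha
  have hcb : ∀ t : ℝ, 0 < t → volume (closedBall (0 : E3) (t ^ (-s)⁻¹))
      = ENNReal.ofReal ((t ^ (-s)⁻¹) ^ (3 : ℕ)) * v := by
    intro t ht
    rw [Measure.addHaar_closedBall _ _ (Real.rpow_nonneg ht.le _), finE3, hv]
  calc ∫⁻ t in Ioi (0:ℝ), μ {a : E3 | t ≤ ‖a‖ ^ (-s)}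
      ≤ ∫⁻ t in Ioc (0:ℝ) 1 ∪ Ioi 1, μ {a : E3 | t ≤ ‖a‖ ^ (-s)} :=
        lintegral_mono_set Ioi_subset_Ioc_union_Ioi
    _ ≤ (∫⁻ t in Ioc (0:ℝ) 1, μ {a : E3 | t ≤ ‖a‖ ^ (-s)})
        + ∫⁻ t in Ioi (1:ℝ), μ {a : E3 | t ≤ ‖a‖ ^ (-s)} := lintegral_union_le _ _ _
    _ < ⊤ := by
        refine ENNReal.add_lt_top.2 ⟨?_, ?_⟩
        · calc ∫⁻ t in Ioc (0:ℝ) 1, μ {a : E3 | t ≤ ‖a‖ ^ (-s)}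
              ≤ ∫⁻ _ in Ioc (0:ℝ) 1, v := by
                refine setLIntegral_mono' measurableSet_Ioc fun t ht => ?_
                exact (measure_mono (subset_univ _)).trans (by rw [hμ, Measure.restrict_apply_univ])
          _ < ⊤ := by
                rw [setLIntegral_const]
                exact ENNReal.mul_lt_top hvfin (by simp [Real.volume_Ioc])
        · calc ∫⁻ t in Ioi (1:ℝ), μ {a : E3 | t ≤ ‖a‖ ^ (-s)}
              ≤ ∫⁻ t in Ioi (1:ℝ), ENNReal.ofReal (t ^ (-(3/s))) * v := by
                refine setLIntegral_mono' measurableSet_Ioi fun t ht => ?_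
                have ht0 : (0:ℝ) < t := lt_trans one_pos ht
                refine ((key t ht0).trans_eq (hcb t ht0)).trans ?_
                gcongr
                rw [← Real.rpow_natCast (t ^ (-s)⁻¹) 3, ← Real.rpow_mul ht0.le]
                apply le_of_eq
                congr 1
                rw [div_eq_mul_inv]
                push_cast
                field_simp
          _ = (∫⁻ t in Ioi (1:ℝ), ENNReal.ofReal (t ^ (-(3/s)))) * v := by
                rw [lintegral_mul_const']
                exact hvfin.ne
          _ < ⊤ := by
                refine ENNReal.mul_lt_top ?_ hvfin
                refine IntegrableOn.setLIntegral_lt_top ?_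
                apply integrableOn_Ioi_rpow_of_lt ?_ one_pos
                rw [neg_lt_neg_iff]
                rw [lt_div_iff₀ hs0]
                linarith

lemma scaleLintegral (g : E3 → ℝ≥0∞) (hg : Measurable g) {σ : ℝ} (hσ : 0 < σ) :
    ∫⁻ ζ, g (σ • ζ) = ENNReal.ofReal (σ ^ (-(3:ℝ))) * ∫⁻ ζ, g ζ := by
  have h1 : ∫⁻ ζ, g (σ • ζ) = ∫⁻ ζ, g ζ ∂(Measure.map (σ • ·) volume) :=
    (lintegral_map hg (measurable_const_smul σ)).symm
  rw [h1, Measure.map_addHaar_smul volume hσ.ne', finE3, lintegral_smul_measure]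
  congr 2
  rw [abs_of_nonneg (by positivity), ← Real.rpow_natCast σ 3, ← Real.rpow_neg hσ.le]
  norm_num

lemma ptWeight {b : ℝ} (hb : 0 < b) {ζ : E3} (hζ : ζ ≠ 0) :
    ((ENNReal.ofReal (‖ζ‖ ^ 2))⁻¹) ^ b = ENNReal.ofReal (‖ζ‖ ^ (-(2*b))) := by
  have h : (0:ℝ) < ‖ζ‖ := norm_pos_iff.mpr hζ
  have hreal : ((‖ζ‖^2 : ℝ))⁻¹ ^ b = ‖ζ‖ ^ (-(2*b)) := by
    rw [← Real.rpow_natCast ‖ζ‖ 2, ← Real.rpow_neg (by positivity), ← Real.rpow_mul h.le]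
    norm_num
  calc ((ENNReal.ofReal (‖ζ‖ ^ 2))⁻¹) ^ b
      = (ENNReal.ofReal ((‖ζ‖ ^ 2)⁻¹)) ^ b := by rw [ENNReal.ofReal_inv_of_pos (by positivity)]
    _ = ENNReal.ofReal (((‖ζ‖ ^ 2)⁻¹) ^ b) := ENNReal.ofReal_rpow_of_pos (by positivity)
    _ = ENNReal.ofReal (‖ζ‖ ^ (-(2*b))) := by rw [hreal]

lemma aeWeight {b : ℝ} (hb : 0 < b) :
    (fun ζ : E3 => ((ENNReal.ofReal (‖ζ‖ ^ 2))⁻¹) ^ b)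
      =ᵐ[(volume : Measure E3).restrict (ball 0 1)]
    fun ζ => ENNReal.ofReal (‖ζ‖ ^ (-(2*b))) := by
  have h0 : ∀ᵐ ζ ∂((volume : Measure E3).restrict (ball 0 1)), ζ ≠ 0 :=
    ae_restrict_of_ae (by
      have h1 : (volume : Measure E3) {(0:E3)} = 0 := measure_singleton 0
      exact measure_mono_null (fun x hx => by simpa using hx) h1)
  filter_upwards [h0] with ζ hζ
  exact ptWeight hb hζ

lemma weightInt {b : ℝ} (hb : 0 < b) (hb' : b < 3/2) :
    (∫⁻ ζ in Metric.ball (0 : E3) 1, ((ENNReal.ofReal (‖ζ‖ ^ 2))⁻¹) ^ b) < ⊤ := by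
  rw [lintegral_congr_ae (aeWeight hb)]
  exact ballInt (by linarith) (by linarith)

lemma swapLem (F : E3 → ℂ) (hF : Measurable F) :
    (∫⁻ ζ in Metric.ball (0:E3) 1,
        (∫⁻ σ in Set.Ioc (0:ℝ) 1, (‖F (σ • ζ)‖₊ : ℝ≥0∞) ^ 2) / ENNReal.ofReal (‖ζ‖ ^ 2))
    = ∫⁻ σ in Set.Ioc (0:ℝ) 1, ∫⁻ ζ in Metric.ball (0:E3) 1,
        (‖F (σ • ζ)‖₊ : ℝ≥0∞) ^ 2 * (ENNReal.ofReal (‖ζ‖ ^ 2))⁻¹ := by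
  have hsm : Measurable fun p : E3 × ℝ => p.2 • p.1 := measurable_snd.smul measurable_fst
  have hm : Measurable (Function.uncurry fun (ζ : E3) (σ : ℝ) =>
      (‖F (σ • ζ)‖₊ : ℝ≥0∞) ^ 2 * (ENNReal.ofReal (‖ζ‖ ^ 2))⁻¹) := by
    apply Measurable.mul
    · exact (((hF.comp hsm).nnnorm).coe_nnreal_ennreal).pow_const 2
    · exact ((measurable_fst.norm.pow_const 2).ennreal_ofReal).inv
  calc (∫⁻ ζ in Metric.ball (0:E3) 1,
        (∫⁻ σ in Set.Ioc (0:ℝ) 1, (‖F (σ • ζ)‖₊ : ℝ≥0∞) ^ 2) / ENNReal.ofReal (‖ζ‖ ^ 2))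
      = ∫⁻ ζ in Metric.ball (0:E3) 1, ∫⁻ σ in Set.Ioc (0:ℝ) 1,
          (‖F (σ • ζ)‖₊ : ℝ≥0∞) ^ 2 * (ENNReal.ofReal (‖ζ‖ ^ 2))⁻¹ := by
        refine lintegral_congr fun ζ => ?_
        rw [div_eq_mul_inv, ← lintegral_mul_const]
        exact ((hF.comp (measurable_id.smul_const ζ)).nnnorm.coe_nnreal_ennreal).pow_const 2
    _ = _ := lintegral_lintegral_swap hm.aemeasurable


/-- Dilation/Hölder estimate: for `q ∈ (6,∞]` there is `C = C(q) > 0` such that for every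
measurable `F : ℝ³ → ℂ` with finite `L^q` norm,
`∫_{|ζ|<1} |ζ|^{-2} (∫₀¹ |F(σζ)|² dσ) dζ ≤ C ‖F‖_{L^q}²`. -/
theorem stmt6 (q : ℝ≥0∞) (hq : 6 < q) :
    ∃ C > (0 : ℝ), ∀ F : E3 → ℂ, Measurable F → eLpNorm F q volume < ⊤ →
      (∫⁻ ζ in {ζ : E3 | ‖ζ‖ < 1},
          (∫⁻ σ in Set.Ioc (0 : ℝ) 1, (‖F (σ • ζ)‖₊ : ℝ≥0∞) ^ 2)
            / ENNReal.ofReal (‖ζ‖ ^ 2))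
        ≤ ENNReal.ofReal C * (eLpNorm F q volume) ^ 2 := by
  have hsetball : {ζ : E3 | ‖ζ‖ < 1} = Metric.ball (0:E3) 1 := by
    ext ζ; simp [mem_ball_zero_iff]
  by_cases hqtop : q = ⊤
  · -- q = ∞ case
    subst hqtop
    set A₀ := ∫⁻ ζ in Metric.ball (0:E3) 1, (ENNReal.ofReal (‖ζ‖ ^ 2))⁻¹ with hA₀
    have hA₀fin : A₀ ≠ ⊤ := by
      have h := weightInt (b := 1) one_pos (by norm_num)
      simpa [ENNReal.rpow_one, hA₀] using h.ne
    refine ⟨A₀.toReal + 1, by positivity, ?_⟩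
    intro F hF hFfin
    set N := eLpNorm F ⊤ volume with hN
    have hae : ∀ᵐ x ∂(volume : Measure E3), (‖F x‖₊ : ℝ≥0∞) ≤ N := by
      rw [hN, eLpNorm_exponent_top]
      exact ae_le_eLpNormEssSup
    have hIσ : ∀ σ ∈ Set.Ioc (0:ℝ) 1,
        (∫⁻ ζ in Metric.ball (0:E3) 1, (‖F (σ • ζ)‖₊ : ℝ≥0∞) ^ 2 * (ENNReal.ofReal (‖ζ‖ ^ 2))⁻¹)
          ≤ N ^ 2 * A₀ := by
      intro σ hσ
      have haeσ : ∀ᵐ ζ ∂(volume : Measure E3), (‖F (σ • ζ)‖₊ : ℝ≥0∞) ≤ N :=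
        (Measure.quasiMeasurePreserving_smul volume hσ.1.ne').ae hae
      calc (∫⁻ ζ in Metric.ball (0:E3) 1,
            (‖F (σ • ζ)‖₊ : ℝ≥0∞) ^ 2 * (ENNReal.ofReal (‖ζ‖ ^ 2))⁻¹)
          ≤ ∫⁻ ζ in Metric.ball (0:E3) 1, N ^ 2 * (ENNReal.ofReal (‖ζ‖ ^ 2))⁻¹ := by
            refine lintegral_mono_ae ?_
            filter_upwards [ae_restrict_of_ae haeσ] with ζ hζ
            gcongr
        _ = N ^ 2 * A₀ := by
            rw [hA₀, lintegral_const_mul]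
            exact ((measurable_norm.pow_const 2).ennreal_ofReal).inv
    calc (∫⁻ ζ in {ζ : E3 | ‖ζ‖ < 1},
          (∫⁻ σ in Set.Ioc (0 : ℝ) 1, (‖F (σ • ζ)‖₊ : ℝ≥0∞) ^ 2)
            / ENNReal.ofReal (‖ζ‖ ^ 2))
        = ∫⁻ σ in Set.Ioc (0:ℝ) 1, ∫⁻ ζ in Metric.ball (0:E3) 1,
            (‖F (σ • ζ)‖₊ : ℝ≥0∞) ^ 2 * (ENNReal.ofReal (‖ζ‖ ^ 2))⁻¹ := by
          rw [hsetball, swapLem F hF]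
      _ ≤ ∫⁻ _ in Set.Ioc (0:ℝ) 1, N ^ 2 * A₀ := setLIntegral_mono' measurableSet_Ioc hIσ
      _ = N ^ 2 * A₀ := by
          rw [setLIntegral_const]
          simp [Real.volume_Ioc]
      _ ≤ ENNReal.ofReal (A₀.toReal + 1) * N ^ 2 := by
          rw [mul_comm]
          refine mul_le_mul_left ?_ _
          exact le_trans (le_of_eq (ENNReal.ofReal_toReal hA₀fin).symm)
            (ENNReal.ofReal_le_ofReal (by linarith [ENNReal.toReal_nonneg (a := A₀)]))
  · -- finite q case
    set p := q.toReal with hp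
    have hq0 : q ≠ 0 := ((by norm_num : (0:ℝ≥0∞) < 6).trans hq).ne'
    have hp6 : 6 < p := by
      have h := ENNReal.toReal_strict_mono hqtop hq
      simpa using h
    have hp0 : 0 < p := by linarith
    set b := p / (p - 2) with hbdef
    have hb1 : 1 < b := by
      rw [hbdef, lt_div_iff₀ (by linarith)]; linarith
    have hb32 : b < 3/2 := by
      rw [hbdef, div_lt_iff₀ (by linarith)]; linarith
    have hconj : (p/2).HolderConjugate b := by
      constructor
      · rw [hbdef, inv_one]
        field_simp
        ring
      · linarith
      · linarith
    set A := (∫⁻ ζ in Metric.ball (0:E3) 1, ((ENNReal.ofReal (‖ζ‖ ^ 2))⁻¹) ^ b) ^ (1/b) with hA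
    have hAfin : A ≠ ⊤ :=
      ENNReal.rpow_ne_top_of_nonneg (by positivity) (weightInt (by linarith) hb32).ne
    set K := ∫⁻ σ in Set.Ioc (0:ℝ) 1, ENNReal.ofReal (σ ^ (-(6/p))) with hK
    have hKfin : K ≠ ⊤ := by
      refine (IntegrableOn.setLIntegral_lt_top ?_).ne
      rw [← intervalIntegrable_iff_integrableOn_Ioc_of_le zero_le_one]
      apply intervalIntegral.intervalIntegrable_rpow'
      have : 6/p < 1 := by rw [div_lt_one hp0]; linarith
      linarith
    refine ⟨(K * A).toReal + 1, by positivity, ?_⟩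
    intro F hF hFfin
    set N := eLpNorm F q volume with hN
    set Ip := ∫⁻ x, (‖F x‖₊ : ℝ≥0∞) ^ p with hIp
    have hNIp : N = Ip ^ (1/p) := by
      rw [hN, eLpNorm_eq_lintegral_rpow_enorm_toReal hq0 hqtop]
      rfl
    have hN2 : N ^ (2:ℕ) = Ip ^ (2/p) := by
      rw [hNIp, ← ENNReal.rpow_natCast (Ip ^ (1/p)) 2, ← ENNReal.rpow_mul]
      congr 1
      push_cast
      ring
    have hIσ : ∀ σ ∈ Set.Ioc (0:ℝ) 1,
        (∫⁻ ζ in Metric.ball (0:E3) 1, (‖F (σ • ζ)‖₊ : ℝ≥0∞) ^ 2 * (ENNReal.ofReal (‖ζ‖ ^ 2))⁻¹)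
          ≤ ENNReal.ofReal (σ ^ (-(6/p))) * (N ^ 2 * A) := by
      intro σ hσ
      have hσ0 : 0 < σ := hσ.1
      have hfm : AEMeasurable (fun ζ : E3 => (‖F (σ • ζ)‖₊ : ℝ≥0∞) ^ 2)
          ((volume : Measure E3).restrict (Metric.ball 0 1)) :=
        (((hF.comp (measurable_const_smul σ)).nnnorm.coe_nnreal_ennreal).pow_const 2).aemeasurable
      have hgm : AEMeasurable (fun ζ : E3 => (ENNReal.ofReal (‖ζ‖ ^ 2))⁻¹)
          ((volume : Measure E3).restrict (Metric.ball 0 1)) :=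
        (((measurable_norm.pow_const 2).ennreal_ofReal).inv).aemeasurable
      have hHold := ENNReal.lintegral_mul_le_Lp_mul_Lq
        ((volume : Measure E3).restrict (Metric.ball 0 1)) hconj hfm hgm
      simp only [Pi.mul_apply] at hHold
      refine le_trans hHold ?_
      have hT1 : (∫⁻ ζ in Metric.ball (0:E3) 1, ((‖F (σ • ζ)‖₊ : ℝ≥0∞) ^ 2) ^ (p/2)) ^ (1/(p/2))
          ≤ ENNReal.ofReal (σ ^ (-(6/p))) * N ^ 2 := by
        have e1 : ∀ ζ : E3, ((‖F (σ • ζ)‖₊ : ℝ≥0∞) ^ 2) ^ (p/2)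
            = (‖F (σ • ζ)‖₊ : ℝ≥0∞) ^ p := by
          intro ζ
          rw [← ENNReal.rpow_natCast ((‖F (σ • ζ)‖₊ : ℝ≥0∞)) 2, ← ENNReal.rpow_mul]
          congr 1
          push_cast
          ring
        have e2 : (∫⁻ ζ in Metric.ball (0:E3) 1, (‖F (σ • ζ)‖₊ : ℝ≥0∞) ^ p)
            ≤ ENNReal.ofReal (σ ^ (-(3:ℝ))) * Ip := by
          refine le_trans (setLIntegral_le_lintegral _ _) ?_
          rw [hIp, ← scaleLintegral (fun η => (‖F η‖₊ : ℝ≥0∞) ^ p)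
            ((hF.nnnorm.coe_nnreal_ennreal).pow_const p) hσ0]
        have h12 : 1/(p/2) = 2/p := by field_simp
        calc (∫⁻ ζ in Metric.ball (0:E3) 1, ((‖F (σ • ζ)‖₊ : ℝ≥0∞) ^ 2) ^ (p/2)) ^ (1/(p/2))
            = (∫⁻ ζ in Metric.ball (0:E3) 1, (‖F (σ • ζ)‖₊ : ℝ≥0∞) ^ p) ^ (2/p) := by
              rw [lintegral_congr fun ζ => e1 ζ, h12]
          _ ≤ (ENNReal.ofReal (σ ^ (-(3:ℝ))) * Ip) ^ (2/p) :=
              ENNReal.rpow_le_rpow e2 (by positivity)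
          _ = ENNReal.ofReal (σ ^ (-(3:ℝ))) ^ (2/p) * Ip ^ (2/p) :=
              ENNReal.mul_rpow_of_nonneg _ _ (by positivity)
          _ = ENNReal.ofReal (σ ^ (-(6/p))) * N ^ 2 := by
              rw [hN2, ENNReal.ofReal_rpow_of_pos (by positivity), ← Real.rpow_mul hσ0.le]
              congr 2
              ring
      calc (∫⁻ ζ in Metric.ball (0:E3) 1, ((‖F (σ • ζ)‖₊ : ℝ≥0∞) ^ 2) ^ (p/2)) ^ (1/(p/2))
            * (∫⁻ ζ in Metric.ball (0:E3) 1, ((ENNReal.ofReal (‖ζ‖ ^ 2))⁻¹) ^ b) ^ (1/b)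
          ≤ (ENNReal.ofReal (σ ^ (-(6/p))) * N ^ 2) * A := by
            rw [hA]
            exact mul_le_mul_left hT1 _
        _ = ENNReal.ofReal (σ ^ (-(6/p))) * (N ^ 2 * A) := by ring
    calc (∫⁻ ζ in {ζ : E3 | ‖ζ‖ < 1},
          (∫⁻ σ in Set.Ioc (0 : ℝ) 1, (‖F (σ • ζ)‖₊ : ℝ≥0∞) ^ 2)
            / ENNReal.ofReal (‖ζ‖ ^ 2))
        = ∫⁻ σ in Set.Ioc (0:ℝ) 1, ∫⁻ ζ in Metric.ball (0:E3) 1,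
            (‖F (σ • ζ)‖₊ : ℝ≥0∞) ^ 2 * (ENNReal.ofReal (‖ζ‖ ^ 2))⁻¹ := by
          rw [hsetball, swapLem F hF]
      _ ≤ ∫⁻ σ in Set.Ioc (0:ℝ) 1, ENNReal.ofReal (σ ^ (-(6/p))) * (N ^ 2 * A) :=
          setLIntegral_mono' measurableSet_Ioc hIσ
      _ = K * (N ^ 2 * A) := by
          rw [hK, lintegral_mul_const]
          fun_prop
      _ = (K * A) * N ^ 2 := by ring
      _ ≤ ENNReal.ofReal ((K * A).toReal + 1) * N ^ 2 := by
          refine mul_le_mul_left ?_ _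
          exact le_trans (le_of_eq (ENNReal.ofReal_toReal (ENNReal.mul_ne_top hKfin hAfin)).symm)
            (ENNReal.ofReal_le_ofReal (by linarith [ENNReal.toReal_nonneg (a := K*A)]))
end
end

section
/- There exists a constant C > 0 such that for every ω > 0 and every R ∈ ℝ, ∫_{ℝ³} ( |ζ|⁴ + (R ζ₁ + ω)² )^{−1} dζ ≤ C ( ω^{−1/2} + |R| ω^{−1} ), where ζ₁ denotes the first coordinate of ζ and |ζ| its Euclidean norm. In particular the integral on the left is finite. -/
open MeasureTheory
open scoped ENNReal

noncomputable section

namespace Stmt9Aux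

open Set

lemma polarE3 (φ : ℝ → ℝ) :
    ∫ x : E3, φ ‖x‖ = (3 * (volume (Metric.ball (0:E3) 1)).toReal) *
      ∫ y in Ioi (0:ℝ), y ^ 2 * φ y := by
  rw [integral_fun_norm_addHaar volume φ]
  simp [finrank_euclideanSpace_fin, smul_eq_mul, mul_assoc]
  left; simp [Measure.real]

def kconst : ℝ := 3 * (volume (Metric.ball (0:E3) 1)).toReal

lemma kpos : 0 < kconst := by
  have h1 : 0 < volume (Metric.ball (0:E3) 1) :=
    Metric.measure_ball_pos volume 0 one_pos
  have h2 : volume (Metric.ball (0:E3) 1) < ⊤ := measure_ball_lt_top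
  have := ENNReal.toReal_pos h1.ne' h2.ne
  unfold kconst; linarith

lemma coord_le (ζ : E3) : |ζ 0| ≤ ‖ζ‖ := by
  rw [EuclideanSpace.norm_eq]
  rw [← Real.sqrt_sq_eq_abs (ζ 0)]
  apply Real.sqrt_le_sqrt
  have : (ζ 0)^2 = ‖ζ 0‖^2 := by simp [Real.norm_eq_abs, sq_abs]
  rw [this]
  exact Finset.single_le_sum (f := fun i => ‖ζ i‖^2) (fun i _ => by positivity) (Finset.mem_univ 0)

lemma cont1 (ω : ℝ) (hω : 0 < ω) :
    Continuous (fun y : ℝ => y ^ 2 * (y ^ 4 + ω ^ 2)⁻¹) := by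
  apply Continuous.mul (by fun_prop)
  apply Continuous.inv₀ (by fun_prop)
  intro y; positivity

lemma oneD_int (ω : ℝ) (hω : 0 < ω) :
    IntegrableOn (fun y : ℝ => y ^ 2 * (y ^ 4 + ω ^ 2)⁻¹) (Ioi 0) := by
  set a := Real.sqrt ω with ha_def
  have ha : 0 < a := Real.sqrt_pos.mpr hω
  have h1 : IntegrableOn (fun y : ℝ => y ^ 2 * (y ^ 4 + ω ^ 2)⁻¹) (Ioc 0 a) :=
    (cont1 ω hω).integrableOn_Ioc
  have h2 : IntegrableOn (fun y : ℝ => y ^ 2 * (y ^ 4 + ω ^ 2)⁻¹) (Ioi a) := by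
    apply Integrable.mono' (integrableOn_Ioi_rpow_of_lt (by norm_num : (-2:ℝ) < -1) ha)
      ((cont1 ω hω).aestronglyMeasurable)
    filter_upwards [ae_restrict_mem measurableSet_Ioi] with y hy
    have hy0 : 0 < y := ha.trans hy
    rw [Real.norm_eq_abs, abs_of_nonneg (by positivity)]
    rw [Real.rpow_neg hy0.le, show ((2:ℝ) = ((2:ℕ):ℝ)) by norm_num, Real.rpow_natCast]
    rw [mul_inv_le_iff₀ (by positivity)]
    have h : (y^2)⁻¹ * (y^4 + ω^2) = y^2 + (y^2)⁻¹ * ω^2 := by field_simp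
    rw [h]
    nlinarith [mul_pos (inv_pos.mpr (show (0:ℝ) < y^2 by positivity)) (show (0:ℝ)<ω^2 by positivity)]
  have := (h1.union h2)
  rwa [Ioc_union_Ioi_eq_Ioi ha.le] at this

lemma oneD_bound (ω : ℝ) (hω : 0 < ω) :
    ∫ y in Ioi (0:ℝ), y ^ 2 * (y ^ 4 + ω ^ 2)⁻¹ ≤ (4/3) * (Real.sqrt ω)⁻¹ := by
  set a := Real.sqrt ω with ha_def
  have ha : 0 < a := Real.sqrt_pos.mpr hω
  have ha2 : a ^ 2 = ω := Real.sq_sqrt hω.le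
  have h1 : IntegrableOn (fun y : ℝ => y ^ 2 * (y ^ 4 + ω ^ 2)⁻¹) (Ioc 0 a) :=
    (cont1 ω hω).integrableOn_Ioc
  have h2 : IntegrableOn (fun y : ℝ => y ^ 2 * (y ^ 4 + ω ^ 2)⁻¹) (Ioi a) :=
    (oneD_int ω hω).mono (Ioi_subset_Ioi ha.le) le_rfl
  have hsplit : ∫ y in Ioi (0:ℝ), y ^ 2 * (y ^ 4 + ω ^ 2)⁻¹
      = (∫ y in Ioc (0:ℝ) a, y ^ 2 * (y ^ 4 + ω ^ 2)⁻¹)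
        + ∫ y in Ioi a, y ^ 2 * (y ^ 4 + ω ^ 2)⁻¹ := by
    rw [← setIntegral_union (Ioc_disjoint_Ioi le_rfl) measurableSet_Ioi h1 h2,
      Ioc_union_Ioi_eq_Ioi ha.le]
  have e1 : (∫ y in Ioc (0:ℝ) a, y ^ 2 * (y ^ 4 + ω ^ 2)⁻¹) ≤ (1/3) * a⁻¹ := by
    have mono : ∫ y in Ioc (0:ℝ) a, y ^ 2 * (y ^ 4 + ω ^ 2)⁻¹
        ≤ ∫ y in Ioc (0:ℝ) a, y ^ 2 * (ω ^ 2)⁻¹ := by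
      apply setIntegral_mono_on h1 (by apply Continuous.integrableOn_Ioc; fun_prop)
        measurableSet_Ioc
      intro y hy
      have : (y ^ 4 + ω ^ 2)⁻¹ ≤ (ω ^ 2)⁻¹ := by
        apply inv_anti₀ (by positivity); nlinarith [pow_nonneg hy.1.le 4]
      nlinarith [sq_nonneg y]
    have comp : ∫ y in Ioc (0:ℝ) a, y ^ 2 * (ω ^ 2)⁻¹ = (1/3) * a⁻¹ := by
      rw [integral_mul_const]
      rw [← intervalIntegral.integral_of_le ha.le]
      rw [integral_pow, show a^(2+1) = ω * a by rw [pow_succ, ha2]]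
      field_simp
      push_cast
      nlinarith [ha2]
    linarith
  have e2 : (∫ y in Ioi a, y ^ 2 * (y ^ 4 + ω ^ 2)⁻¹) ≤ a⁻¹ := by
    have mono : ∫ y in Ioi a, y ^ 2 * (y ^ 4 + ω ^ 2)⁻¹ ≤ ∫ y in Ioi a, y ^ (-2:ℝ) := by
      apply setIntegral_mono_on h2 (integrableOn_Ioi_rpow_of_lt (by norm_num) ha)
        measurableSet_Ioi
      intro y hy
      have hy0 : 0 < y := ha.trans hy
      rw [Real.rpow_neg hy0.le, show ((2:ℝ) = ((2:ℕ):ℝ)) by norm_num, Real.rpow_natCast]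
      rw [mul_inv_le_iff₀ (by positivity)]
      have h : (y^2)⁻¹ * (y^4 + ω^2) = y^2 + (y^2)⁻¹ * ω^2 := by field_simp
      rw [h]
      nlinarith [mul_pos (inv_pos.mpr (show (0:ℝ) < y^2 by positivity))
        (show (0:ℝ)<ω^2 by positivity)]
    have comp : ∫ y in Ioi a, y ^ (-2:ℝ) = a⁻¹ := by
      rw [integral_Ioi_rpow_of_lt (by norm_num) ha]
      norm_num
      rw [Real.rpow_neg_one]
    linarith
  rw [hsplit]
  linarith

lemma jb_bound (ω t : ℝ) (hω : 0 < ω) (ht : 0 ≤ t) :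
    (t ^ 4 + ω ^ 2)⁻¹ ≤ (16 / min 1 (ω^2)) * ((1 + t) ^ (-(4:ℝ))) := by
  have hm : 0 < min 1 (ω^2) := lt_min one_pos (by positivity)
  have h4 : (1 + t) ^ (-(4:ℝ)) = ((1 + t)^(4:ℕ))⁻¹ := by
    rw [Real.rpow_neg (by linarith), show ((4:ℝ) = ((4:ℕ):ℝ)) by norm_num, Real.rpow_natCast]
  rw [h4]
  have key : min 1 (ω^2) / 16 * (1+t)^(4:ℕ) ≤ t ^ 4 + ω ^ 2 := by
    have h1 : (1+t)^(4:ℕ) ≤ 16 * (1 + t^4) := by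
      nlinarith [sq_nonneg (t-1), sq_nonneg (t^2-1), sq_nonneg (t^2-t), sq_nonneg t,
        pow_nonneg ht 3]
    have h2 : min 1 (ω^2) ≤ 1 := min_le_left _ _
    have h3 : min 1 (ω^2) ≤ ω^2 := min_le_right _ _
    nlinarith [pow_nonneg ht 4, mul_le_mul_of_nonneg_left h1 hm.le]
  calc (t ^ 4 + ω ^ 2)⁻¹ ≤ (min 1 (ω^2) / 16 * (1+t)^(4:ℕ))⁻¹ := by
        apply inv_anti₀ (by positivity) key
  _ = (16 / min 1 (ω^2)) * ((1 + t)^(4:ℕ))⁻¹ := by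
        rw [mul_inv]; congr 1
        rw [div_eq_mul_inv, div_eq_mul_inv, mul_inv, inv_inv, mul_comm]
  _ ≤ _ := le_refl _

lemma f_integrable (ω : ℝ) (hω : 0 < ω) :
    Integrable (fun ζ : E3 => (‖ζ‖ ^ 4 + ω ^ 2)⁻¹) := by
  have hmaj : Integrable (fun x : E3 => (16 / min 1 (ω^2)) * ((1 + ‖x‖) ^ (-(4:ℝ)))) :=
    (integrable_one_add_norm (by rw [finrank_euclideanSpace_fin]; norm_num)).const_mul _
  apply hmaj.mono'
  · apply Continuous.aestronglyMeasurable
    apply Continuous.inv₀ (by fun_prop)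
    intro x; positivity
  · filter_upwards with x
    rw [Real.norm_eq_abs, abs_of_nonneg (by positivity)]
    exact jb_bound ω ‖x‖ hω (norm_nonneg x)

lemma g_integrable (r₀ : ℝ) (hr : 0 < r₀) :
    Integrable (fun ζ : E3 => if r₀ ≤ ‖ζ‖ then (‖ζ‖ ^ 4)⁻¹ else 0) := by
  have hmaj : Integrable (fun x : E3 => ((1 + r₀⁻¹)^(4:ℕ)) * ((1 + ‖x‖) ^ (-(4:ℝ)))) :=
    (integrable_one_add_norm (by rw [finrank_euclideanSpace_fin]; norm_num)).const_mul _
  apply hmaj.mono'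
  · apply AEStronglyMeasurable.congr
      (f := Set.indicator {x : E3 | r₀ ≤ ‖x‖} (fun x => (‖x‖^4)⁻¹))
    · apply AEStronglyMeasurable.indicator
      · exact (measurable_norm.pow_const 4).inv.aestronglyMeasurable
      · exact (isClosed_le continuous_const continuous_norm).measurableSet
    · filter_upwards with x
      simp [Set.indicator_apply, Set.mem_setOf_eq]
  · filter_upwards with x
    rw [Real.norm_eq_abs]
    by_cases h : r₀ ≤ ‖x‖
    · rw [if_pos h, abs_of_nonneg (by positivity)]
      have hx : 0 < ‖x‖ := hr.trans_le h
      have h4 : (1 + ‖x‖) ^ (-(4:ℝ)) = ((1 + ‖x‖)^(4:ℕ))⁻¹ := by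
        rw [Real.rpow_neg (by positivity), show ((4:ℝ) = ((4:ℕ):ℝ)) by norm_num,
          Real.rpow_natCast]
      rw [h4]
      have key : 1 + ‖x‖ ≤ (1 + r₀⁻¹) * ‖x‖ := by
        have : 1 ≤ r₀⁻¹ * ‖x‖ := by
          rw [← inv_mul_cancel₀ hr.ne']
          exact mul_le_mul_of_nonneg_left h (by positivity)
        nlinarith
      calc (‖x‖^4)⁻¹ = (‖x‖^(4:ℕ))⁻¹ := by norm_num
      _ ≤ (((1 + r₀⁻¹)⁻¹ * (1+‖x‖))^(4:ℕ))⁻¹ := by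
          apply inv_anti₀ (by positivity)
          apply pow_le_pow_left₀ (by positivity)
          rw [inv_mul_le_iff₀ (by positivity)]
          linarith [key]
      _ = ((1 + r₀⁻¹)^(4:ℕ)) * ((1+‖x‖)^(4:ℕ))⁻¹ := by
          rw [mul_pow, mul_inv, ← inv_pow, inv_inv]
    · rw [if_neg h, abs_of_nonneg le_rfl]
      positivity

lemma f_integral_le (ω : ℝ) (hω : 0 < ω) :
    ∫ ζ : E3, (‖ζ‖ ^ 4 + ω ^ 2)⁻¹ ≤ kconst * ((4/3) * (Real.sqrt ω)⁻¹) := by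
  have h := polarE3 (fun y => (y ^ 4 + ω ^ 2)⁻¹)
  rw [show (∫ ζ : E3, (‖ζ‖ ^ 4 + ω ^ 2)⁻¹)
      = ∫ x : E3, (fun y => (y ^ 4 + ω ^ 2)⁻¹) ‖x‖ from rfl, h, ← kconst]
  exact mul_le_mul_of_nonneg_left (oneD_bound ω hω) kpos.le

lemma g_integral (r₀ : ℝ) (hr : 0 < r₀) :
    ∫ ζ : E3, (if r₀ ≤ ‖ζ‖ then (‖ζ‖ ^ 4)⁻¹ else 0) = kconst * r₀⁻¹ := by
  have h := polarE3 (fun y => if r₀ ≤ y then (y ^ 4)⁻¹ else 0)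
  rw [show (∫ ζ : E3, (if r₀ ≤ ‖ζ‖ then (‖ζ‖ ^ 4)⁻¹ else 0))
      = ∫ x : E3, (fun y => if r₀ ≤ y then (y ^ 4)⁻¹ else 0) ‖x‖ from rfl, h]
  rw [← kconst]
  congr 1
  have e1 : ∀ y : ℝ, y ^ 2 * (if r₀ ≤ y then (y ^ 4)⁻¹ else 0)
      = Set.indicator (Ici r₀) (fun y => y ^ 2 * (y ^ 4)⁻¹) y := by
    intro y; simp [Set.indicator_apply, mem_Ici, mul_ite]
  rw [integral_congr_ae (Filter.Eventually.of_forall fun y => e1 y)]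
  rw [setIntegral_indicator measurableSet_Ici]
  rw [show Ioi (0:ℝ) ∩ Ici r₀ = Ici r₀ from
    Set.inter_eq_self_of_subset_right (fun y (hy : y ∈ Ici r₀) => hr.trans_le hy)]
  rw [integral_Ici_eq_integral_Ioi]
  rw [setIntegral_congr_fun measurableSet_Ioi
    (g := fun y : ℝ => y ^ (-2:ℝ)) (fun y hy => by
      have hy0 : 0 < y := hr.trans hy
      show y ^ 2 * (y ^ 4)⁻¹ = y ^ (-2:ℝ)
      rw [Real.rpow_neg hy0.le, show ((2:ℝ) = ((2:ℕ):ℝ)) by norm_num, Real.rpow_natCast]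
      field_simp)]
  rw [integral_Ioi_rpow_of_lt (by norm_num) hr]
  norm_num
  rw [Real.rpow_neg_one]

end Stmt9Aux

open Stmt9Aux Set

/-- The key integral estimate, uniform in the translation parameter `R` and in the angular
speed `ω > 0`: `∫_{ℝ³} (|ζ|⁴ + (Rζ₁ + ω)²)⁻¹ dζ ≤ C (ω^{-1/2} + |R| ω⁻¹)`.  In particular the
integral on the left-hand side is finite. -/
theorem stmt9 :
    ∃ C > (0 : ℝ), ∀ (ω R : ℝ), 0 < ω →
      (∫⁻ ζ : E3, ENNReal.ofReal ((‖ζ‖ ^ 4 + (R * ζ 0 + ω) ^ 2)⁻¹))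
        ≤ ENNReal.ofReal (C * (ω ^ (-(1 / 2 : ℝ)) + |R| * ω⁻¹)) := by
  refine ⟨6 * kconst, by nlinarith [kpos], fun ω R hω => ?_⟩
  have hsq : ω ^ (-(1 / 2 : ℝ)) = (Real.sqrt ω)⁻¹ := by
    rw [Real.rpow_neg hω.le, ← Real.sqrt_eq_rpow]
  have hs0 : 0 < Real.sqrt ω := Real.sqrt_pos.mpr hω
  have hfint := f_integrable ω hω
  have hfle := f_integral_le ω hω
  have hf0 : 0 ≤ ∫ ζ : E3, (‖ζ‖ ^ 4 + ω ^ 2)⁻¹ :=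
    integral_nonneg fun ζ => by positivity
  by_cases hR : R = 0
  · subst hR
    simp only [zero_mul, zero_add, abs_zero]
    have conv1 : ∫⁻ ζ : E3, ENNReal.ofReal ((‖ζ‖ ^ 4 + ω ^ 2)⁻¹)
        = ENNReal.ofReal (∫ ζ : E3, (‖ζ‖ ^ 4 + ω ^ 2)⁻¹) :=
      (ofReal_integral_eq_lintegral_ofReal hfint
        (Filter.Eventually.of_forall fun ζ => by positivity)).symm
    rw [conv1]
    apply ENNReal.ofReal_le_ofReal
    rw [hsq]
    nlinarith [kpos, inv_pos.mpr hs0]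
  · have hRpos : 0 < |R| := abs_pos.mpr hR
    set r₀ : ℝ := ω / (2 * |R|) with hr₀_def
    have hr₀ : 0 < r₀ := by positivity
    have hgint := g_integrable r₀ hr₀
    have hgval := g_integral r₀ hr₀
    have hg0 : ∀ ζ : E3, (0:ℝ) ≤ (if r₀ ≤ ‖ζ‖ then (‖ζ‖ ^ 4)⁻¹ else 0) := by
      intro ζ
      split
      · have : 0 < ‖ζ‖ := hr₀.trans_le (by assumption)
        positivity
      · exact le_refl 0
    -- pointwise bound
    have hpt : ∀ ζ : E3, (‖ζ‖ ^ 4 + (R * ζ 0 + ω) ^ 2)⁻¹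
        ≤ 4 * (‖ζ‖ ^ 4 + ω ^ 2)⁻¹ + (if r₀ ≤ ‖ζ‖ then (‖ζ‖ ^ 4)⁻¹ else 0) := by
      intro ζ
      by_cases hc : ω / 2 ≤ |R * ζ 0 + ω|
      · have hsqge : ω ^ 2 / 4 ≤ (R * ζ 0 + ω) ^ 2 := by
          have h := sq_abs (R * ζ 0 + ω)
          nlinarith [abs_nonneg (R * ζ 0 + ω)]
        have hkey : (‖ζ‖ ^ 4 + (R * ζ 0 + ω) ^ 2)⁻¹ ≤ 4 * (‖ζ‖ ^ 4 + ω ^ 2)⁻¹ := by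
          have h1 : (‖ζ‖ ^ 4 + ω ^ 2) / 4 ≤ ‖ζ‖ ^ 4 + (R * ζ 0 + ω) ^ 2 := by
            nlinarith [pow_nonneg (norm_nonneg ζ) 4]
          calc (‖ζ‖ ^ 4 + (R * ζ 0 + ω) ^ 2)⁻¹ ≤ ((‖ζ‖ ^ 4 + ω ^ 2) / 4)⁻¹ :=
                inv_anti₀ (by positivity) h1
          _ = 4 * (‖ζ‖ ^ 4 + ω ^ 2)⁻¹ := by
                rw [inv_div, div_eq_mul_inv]
        linarith [hg0 ζ]
      · push_neg at hc
        have habs : ω / 2 < |R| * |ζ 0| := by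
          have h1 : |(R * ζ 0 + ω) + (-(R * ζ 0))| ≤ |R * ζ 0 + ω| + |(-(R * ζ 0))| :=
            abs_add_le _ _
          rw [show (R * ζ 0 + ω) + (-(R * ζ 0)) = ω by ring, abs_neg, abs_mul,
            abs_of_pos hω] at h1
          linarith
        have h2 : r₀ ≤ |ζ 0| := by
          rw [hr₀_def, div_le_iff₀ (by positivity)]
          nlinarith
        have h3 : r₀ ≤ ‖ζ‖ := h2.trans (coord_le ζ)
        rw [if_pos h3]
        have hn : 0 < ‖ζ‖ := hr₀.trans_le h3
        have hkey : (‖ζ‖ ^ 4 + (R * ζ 0 + ω) ^ 2)⁻¹ ≤ (‖ζ‖ ^ 4)⁻¹ :=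
          inv_anti₀ (by positivity) (by nlinarith [sq_nonneg (R * ζ 0 + ω)])
        have hf4 : (0:ℝ) ≤ 4 * (‖ζ‖ ^ 4 + ω ^ 2)⁻¹ := by positivity
        linarith
    have hcontf : Continuous fun ζ : E3 => (‖ζ‖ ^ 4 + ω ^ 2)⁻¹ :=
      Continuous.inv₀ (by fun_prop) (fun ζ => by positivity)
    have hmeas : Measurable fun ζ : E3 => ENNReal.ofReal (4 * (‖ζ‖ ^ 4 + ω ^ 2)⁻¹) :=
      (continuous_const.mul hcontf).measurable.ennreal_ofReal
    have step1 : (∫⁻ ζ : E3, ENNReal.ofReal ((‖ζ‖ ^ 4 + (R * ζ 0 + ω) ^ 2)⁻¹))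
        ≤ ∫⁻ ζ : E3, (ENNReal.ofReal (4 * (‖ζ‖ ^ 4 + ω ^ 2)⁻¹)
            + ENNReal.ofReal (if r₀ ≤ ‖ζ‖ then (‖ζ‖ ^ 4)⁻¹ else 0)) := by
      apply lintegral_mono
      intro ζ
      dsimp only
      rw [← ENNReal.ofReal_add (by positivity) (hg0 ζ)]
      exact ENNReal.ofReal_le_ofReal (hpt ζ)
    have step2 : (∫⁻ ζ : E3, (ENNReal.ofReal (4 * (‖ζ‖ ^ 4 + ω ^ 2)⁻¹)
            + ENNReal.ofReal (if r₀ ≤ ‖ζ‖ then (‖ζ‖ ^ 4)⁻¹ else 0)))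
        = (∫⁻ ζ : E3, ENNReal.ofReal (4 * (‖ζ‖ ^ 4 + ω ^ 2)⁻¹))
            + ∫⁻ ζ : E3, ENNReal.ofReal (if r₀ ≤ ‖ζ‖ then (‖ζ‖ ^ 4)⁻¹ else 0) :=
      lintegral_add_left hmeas _
    have conv1 : (∫⁻ ζ : E3, ENNReal.ofReal (4 * (‖ζ‖ ^ 4 + ω ^ 2)⁻¹))
        = ENNReal.ofReal (∫ ζ : E3, 4 * (‖ζ‖ ^ 4 + ω ^ 2)⁻¹) :=
      (ofReal_integral_eq_lintegral_ofReal (hfint.const_mul 4)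
        (Filter.Eventually.of_forall fun ζ => by positivity)).symm
    have conv2 : (∫⁻ ζ : E3, ENNReal.ofReal (if r₀ ≤ ‖ζ‖ then (‖ζ‖ ^ 4)⁻¹ else 0))
        = ENNReal.ofReal (∫ ζ : E3, (if r₀ ≤ ‖ζ‖ then (‖ζ‖ ^ 4)⁻¹ else 0)) :=
      (ofReal_integral_eq_lintegral_ofReal hgint
        (Filter.Eventually.of_forall fun ζ => hg0 ζ)).symm
    have hA : ∫ ζ : E3, 4 * (‖ζ‖ ^ 4 + ω ^ 2)⁻¹ = 4 * ∫ ζ : E3, (‖ζ‖ ^ 4 + ω ^ 2)⁻¹ :=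
      integral_const_mul 4 _
    have hA0 : 0 ≤ ∫ ζ : E3, 4 * (‖ζ‖ ^ 4 + ω ^ 2)⁻¹ :=
      integral_nonneg fun ζ => by positivity
    have hB0 : 0 ≤ ∫ ζ : E3, (if r₀ ≤ ‖ζ‖ then (‖ζ‖ ^ 4)⁻¹ else 0) :=
      integral_nonneg fun ζ => hg0 ζ
    calc (∫⁻ ζ : E3, ENNReal.ofReal ((‖ζ‖ ^ 4 + (R * ζ 0 + ω) ^ 2)⁻¹))
        ≤ _ := step1
    _ = _ := step2
    _ = ENNReal.ofReal (∫ ζ : E3, 4 * (‖ζ‖ ^ 4 + ω ^ 2)⁻¹)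
          + ENNReal.ofReal (∫ ζ : E3, (if r₀ ≤ ‖ζ‖ then (‖ζ‖ ^ 4)⁻¹ else 0)) := by
        rw [conv1, conv2]
    _ = ENNReal.ofReal ((∫ ζ : E3, 4 * (‖ζ‖ ^ 4 + ω ^ 2)⁻¹)
          + ∫ ζ : E3, (if r₀ ≤ ‖ζ‖ then (‖ζ‖ ^ 4)⁻¹ else 0)) :=
        (ENNReal.ofReal_add hA0 hB0).symm
    _ ≤ ENNReal.ofReal (6 * kconst * (ω ^ (-(1 / 2 : ℝ)) + |R| * ω⁻¹)) := by
        apply ENNReal.ofReal_le_ofReal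
        rw [hA, hgval, hsq, hr₀_def, inv_div]
        have hiv : 0 < (Real.sqrt ω)⁻¹ := inv_pos.mpr hs0
        have hRw : 0 ≤ |R| * ω⁻¹ := by positivity
        have e : kconst * (2 * |R| / ω) = 2 * kconst * (|R| * ω⁻¹) := by
          field_simp
        rw [e]
        nlinarith [kpos, mul_pos kpos hiv, mul_nonneg kpos.le hRw]
end
end

section
/- The integral ∫₀^∞ ρ² / (ρ⁴ + 1/4) dρ is finite, and for every b ∈ ℝ and every c ∈ [−1, 1], ∫₀^∞ ρ² / ( ρ⁴ + (b c ρ + 1)² ) dρ ≤ ∫₀^∞ ρ² / (ρ⁴ + 1/4) dρ + 2|b|. -/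
open MeasureTheory
open scoped ENNReal

noncomputable section

lemma tail_lintegral {T : ℝ} (hT : 0 < T) :
    (∫⁻ ρ in Set.Ioi T, ENNReal.ofReal (ρ ^ (-2 : ℝ))) = ENNReal.ofReal T⁻¹ := by
  rw [← ofReal_integral_eq_lintegral_ofReal
      (integrableOn_Ioi_rpow_of_lt (by norm_num) hT)
      ((ae_restrict_iff' measurableSet_Ioi).2 (Filter.Eventually.of_forall
        fun x hx => Real.rpow_nonneg (le_of_lt (lt_trans hT hx)) _))]
  rw [integral_Ioi_rpow_of_lt (by norm_num) hT]
  norm_num [Real.rpow_neg_one]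

lemma bound_tail {ρ X : ℝ} (hρ : 0 < ρ) (hX : 0 ≤ X) :
    ρ ^ 2 / (ρ ^ 4 + X) ≤ ρ ^ (-2 : ℝ) := by
  have h1 : ρ ^ (-2 : ℝ) = ρ ^ 2 / ρ ^ 4 := by
    rw [show ((-2:ℝ)) = -((2:ℕ):ℝ) by norm_num, Real.rpow_neg hρ.le, Real.rpow_natCast]
    field_simp
  rw [h1]
  gcongr
  linarith

lemma bound_mid {ρ X : ℝ} (hX : 1/4 ≤ X) :
    ρ ^ 2 / (ρ ^ 4 + X) ≤ ρ ^ 2 / (ρ ^ 4 + 1/4) := by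
  gcongr


lemma finite_part :
    (∫⁻ ρ in Set.Ioi (0 : ℝ), ENNReal.ofReal (ρ ^ 2 / (ρ ^ 4 + 1 / 4))) < ⊤ := by
  rw [← Set.Ioc_union_Ioi_eq_Ioi (zero_le_one (α := ℝ)),
    lintegral_union measurableSet_Ioi (Set.Ioc_disjoint_Ioi le_rfl)]
  have h1 : (∫⁻ ρ in Set.Ioc (0:ℝ) 1, ENNReal.ofReal (ρ ^ 2 / (ρ ^ 4 + 1 / 4)))
      ≤ ∫⁻ _ in Set.Ioc (0:ℝ) 1, ENNReal.ofReal 4 := by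
    apply setLIntegral_mono' measurableSet_Ioc
    intro ρ hρ
    apply ENNReal.ofReal_le_ofReal
    have h2 : ρ ^ 2 / (ρ ^ 4 + 1/4) ≤ ρ ^ 2 / (1/4) := by
      gcongr
      nlinarith [pow_nonneg hρ.1.le 4]
    have h3 : ρ ^ 2 ≤ 1 := by nlinarith [hρ.1, hρ.2]
    calc ρ ^ 2 / (ρ ^ 4 + 1/4) ≤ ρ ^ 2 / (1/4) := h2
      _ = 4 * ρ ^ 2 := by ring
      _ ≤ 4 := by linarith
  have h4 : (∫⁻ ρ in Set.Ioi (1:ℝ), ENNReal.ofReal (ρ ^ 2 / (ρ ^ 4 + 1 / 4)))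
      ≤ ∫⁻ ρ in Set.Ioi (1:ℝ), ENNReal.ofReal (ρ ^ (-2 : ℝ)) := by
    apply setLIntegral_mono' measurableSet_Ioi
    intro ρ hρ
    exact ENNReal.ofReal_le_ofReal (bound_tail (lt_trans one_pos hρ) (by norm_num))
  have h5 := tail_lintegral (T := 1) one_pos
  apply ENNReal.add_lt_top.2
  constructor
  · refine lt_of_le_of_lt h1 ?_
    rw [setLIntegral_const]
    exact ENNReal.mul_lt_top ENNReal.ofReal_lt_top (by simp [Real.volume_Ioc])
  · exact lt_of_le_of_lt h4 (h5 ▸ ENNReal.ofReal_lt_top)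

lemma second_part (b : ℝ) (c : ℝ) (hc : c ∈ Set.Icc (-1 : ℝ) 1) :
    (∫⁻ ρ in Set.Ioi (0 : ℝ), ENNReal.ofReal (ρ ^ 2 / (ρ ^ 4 + (b * c * ρ + 1) ^ 2)))
      ≤ (∫⁻ ρ in Set.Ioi (0 : ℝ), ENNReal.ofReal (ρ ^ 2 / (ρ ^ 4 + 1 / 4)))
          + ENNReal.ofReal (2 * |b|) := by
  have key : ∀ ρ : ℝ, 0 < ρ → |b| * ρ ≤ 1/2 →
      ρ ^ 2 / (ρ ^ 4 + (b * c * ρ + 1) ^ 2) ≤ ρ ^ 2 / (ρ ^ 4 + 1 / 4) := by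
    intro ρ hρ hbρ
    apply bound_mid
    have h1 : |b * c * ρ| ≤ 1/2 := by
      rw [abs_mul, abs_mul, abs_of_pos hρ]
      calc |b| * |c| * ρ ≤ |b| * 1 * ρ :=
            mul_le_mul_of_nonneg_right
              (mul_le_mul_of_nonneg_left (abs_le.2 ⟨hc.1, hc.2⟩) (abs_nonneg b)) hρ.le
        _ = |b| * ρ := by ring
        _ ≤ 1/2 := hbρ
    have h2 : -(1/2) ≤ b * c * ρ := (abs_le.1 h1).1
    nlinarith
  rcases eq_or_ne b 0 with hb | hb
  · subst hb
    refine le_trans (lintegral_mono fun ρ => ENNReal.ofReal_le_ofReal ?_) le_self_add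
    simp only [zero_mul, zero_add, one_pow]
    apply bound_mid
    norm_num
  · set T : ℝ := (2 * |b|)⁻¹ with hTdef
    have hb' : 0 < |b| := abs_pos.2 hb
    have hT : 0 < T := by positivity
    conv_lhs => rw [← Set.Ioc_union_Ioi_eq_Ioi hT.le,
      lintegral_union measurableSet_Ioi (Set.Ioc_disjoint_Ioi le_rfl)]
    apply add_le_add
    · calc (∫⁻ ρ in Set.Ioc (0:ℝ) T, ENNReal.ofReal (ρ ^ 2 / (ρ ^ 4 + (b * c * ρ + 1) ^ 2)))
          ≤ ∫⁻ ρ in Set.Ioc (0:ℝ) T, ENNReal.ofReal (ρ ^ 2 / (ρ ^ 4 + 1 / 4)) := by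
            apply setLIntegral_mono' measurableSet_Ioc
            intro ρ hρ
            apply ENNReal.ofReal_le_ofReal
            apply key ρ hρ.1
            calc |b| * ρ ≤ |b| * T := by nlinarith [hρ.2]
              _ = 1/2 := by rw [hTdef]; field_simp
        _ ≤ ∫⁻ ρ in Set.Ioi (0:ℝ), ENNReal.ofReal (ρ ^ 2 / (ρ ^ 4 + 1 / 4)) :=
            lintegral_mono_set Set.Ioc_subset_Ioi_self
    · calc (∫⁻ ρ in Set.Ioi T, ENNReal.ofReal (ρ ^ 2 / (ρ ^ 4 + (b * c * ρ + 1) ^ 2)))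
          ≤ ∫⁻ ρ in Set.Ioi T, ENNReal.ofReal (ρ ^ (-2 : ℝ)) := by
            apply setLIntegral_mono' measurableSet_Ioi
            intro ρ hρ
            exact ENNReal.ofReal_le_ofReal (bound_tail (lt_trans hT hρ) (by positivity))
        _ = ENNReal.ofReal T⁻¹ := tail_lintegral hT
        _ = ENNReal.ofReal (2 * |b|) := by rw [hTdef, inv_inv]

/-- The radial integral estimate: `∫₀^∞ ρ²/(ρ⁴+1/4) dρ` is finite, and for every `b ∈ ℝ` and
`c ∈ [-1,1]`, `∫₀^∞ ρ²/(ρ⁴+(bcρ+1)²) dρ ≤ ∫₀^∞ ρ²/(ρ⁴+1/4) dρ + 2|b|`. -/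
theorem stmt11 :
    (∫⁻ ρ in Set.Ioi (0 : ℝ), ENNReal.ofReal (ρ ^ 2 / (ρ ^ 4 + 1 / 4))) < ⊤ ∧
    ∀ (b : ℝ), ∀ c ∈ Set.Icc (-1 : ℝ) 1,
      (∫⁻ ρ in Set.Ioi (0 : ℝ), ENNReal.ofReal (ρ ^ 2 / (ρ ^ 4 + (b * c * ρ + 1) ^ 2)))
        ≤ (∫⁻ ρ in Set.Ioi (0 : ℝ), ENNReal.ofReal (ρ ^ 2 / (ρ ^ 4 + 1 / 4)))
            + ENNReal.ofReal (2 * |b|) := by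
  exact ⟨finite_part, second_part⟩
end
end
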